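/- arXiv:1606.02125 — 3 statements merged into one kernel-verified Lean document; each statement's English description precedes it below -/
import Mathlib

section
/- Let f be an entire function on ℂ and ψ a non-negative, even, locally integrable function on ℝ such that for some positive constants a and C one has |f(z)| ≤ C e^{a|z|} for all z ∈ ℂ and |f(x)| ≤ C e^{−ψ(x)} for all x ∈ ℝ. If ∫_ℝ ψ(r)/(1+r²) dr = ∞, then f is identically zero on ℂ. -/
/-!
For continuous, compactly supported `φ ≥ 0` with `|f| e^φ ≤ C` on `ℝ`, let `P[φ]` be its Poisson
integral in the upper half-plane and `𝒞φ` its Cauchy transform, so that `Im 𝒞φ = π P[φ]`. The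
function `f(z) exp(i a z - i 𝒞φ(z) / π)` is holomorphic in the upper half-plane, bounded there
by Phragmén–Lindelöf (as `f` has exponential type and is bounded on `ℝ`), and its boundary values
have modulus `|f| e^φ ≤ C`. The maximum principle gives `|f z| e^{P[φ](z)} ≤ C e^{a Im z}`.
As `P[φ](z)` dominates a multiple of `∫ φ(t)/(1+t²) dt`, and truncations of `-log (|f|/C) ≥ ψ`
make this integral arbitrarily large, `f` vanishes on the upper half-plane, hence everywhere.
-/

open MeasureTheory Filter Topology Set Complex Bornology

noncomputable section

section MaximumPrinciple

variable {E F : Type*} [NormedAddCommGroup E] [NormedSpace ℂ E] [Nontrivial E]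
  [NormedAddCommGroup F] [NormedSpace ℂ F]

theorem Complex.norm_le_of_forall_eventually_norm_lt {U : Set E} (hU : IsOpen U) {g : E → F}
    (hg : DifferentiableOn ℂ g U) {c : ℝ}
    (hfr : ∀ p ∈ frontier U, ∀ c' > c, ∀ᶠ z in 𝓝[U] p, ‖g z‖ < c')
    (hinf : ∀ c' > c, ∀ᶠ z in cobounded E ⊓ 𝓟 U, ‖g z‖ < c') {z : E} (hz : z ∈ U) :
    ‖g z‖ ≤ c := by
  refine le_of_forall_gt_imp_ge_of_dense fun c' hc' => ?_
  -- `V` is bounded and its closure lies in `U`, so the classical maximum principle applies to it.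
  set V := {w ∈ U | c' < ‖g w‖}
  have hVU : V ⊆ U := sep_subset _ _
  have hVopen : IsOpen V := hg.continuousOn.norm.isOpen_inter_preimage hU isOpen_Ioi
  have hVbdd : IsBounded V := by
    refine isBounded_def.2 (mem_of_superset (mem_inf_principal.1 (hinf c' hc')) ?_)
    rintro w hw ⟨hwU, hlt⟩
    exact (hw hwU).not_gt hlt
  have hclV : closure V ⊆ U := by
    intro p hp
    by_contra hpU
    have hpfr : p ∈ frontier U := ⟨closure_mono hVU hp, by rwa [hU.interior_eq]⟩
    have hne : (𝓝[V] p).NeBot := mem_closure_iff_nhdsWithin_neBot.1 hp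
    obtain ⟨w, hlt, hwV⟩ := ((hfr p hpfr c' hc').filter_mono (nhdsWithin_mono _ hVU)).and
      self_mem_nhdsWithin |>.exists
    exact hlt.not_gt hwV.2
  by_cases hzV : z ∈ V
  · refine norm_le_of_forall_mem_frontier_norm_le hVbdd
      ⟨hg.mono hVU, hg.continuousOn.mono hclV⟩ (fun w hw => ?_) (subset_closure hzV)
    have hwU : w ∈ U := hclV hw.1
    have hwV : w ∉ V := by simpa [hVopen.interior_eq] using hw.2
    simpa [V, hwU] using hwV
  · simpa [V, hz] using hzV

theorem Complex.le_norm_add_mul_I {z : ℂ} (hz : 0 ≤ z.im) (r : ℝ) : r ≤ ‖z + r * I‖ :=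
  calc r ≤ (z + r * I).im := by simpa using hz
    _ ≤ ‖z + r * I‖ := (le_abs_self _).trans (abs_im_le_norm _)

theorem Complex.norm_ofReal_div_add_mul_I_le_one {z : ℂ} (hz : 0 ≤ z.im) {r : ℝ} (hr : 0 ≤ r) :
    ‖(r : ℂ) / (z + r * I)‖ ≤ 1 := by
  rw [norm_div, norm_real, Real.norm_of_nonneg hr]
  exact div_le_one_of_le₀ (le_norm_add_mul_I hz r) (norm_nonneg _)

theorem Complex.tendsto_ofReal_div_add_mul_I_cobounded (r : ℝ) :
    Tendsto (fun z : ℂ => (r : ℂ) / (z + r * I)) (cobounded ℂ) (𝓝 0) := by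
  simpa [div_eq_mul_inv] using
    (tendsto_inv₀_cobounded.comp (tendsto_add_const_cobounded ((r : ℂ) * I))).const_mul (r : ℂ)

theorem Complex.norm_ofReal_div_add_mul_I_smul_le {g : ℂ → F}
    (hg : DifferentiableOn ℂ g {z | 0 < z.im}) {M c : ℝ} (hM : ∀ z : ℂ, 0 < z.im → ‖g z‖ ≤ M)
    (hb : ∀ x : ℝ, ∀ c' > c, ∀ᶠ z in 𝓝[{z | 0 < z.im}] (x : ℂ), ‖g z‖ < c') {r : ℝ}
    (hr : 0 < r) {z : ℂ} (hz : 0 < z.im) : ‖(r / (z + r * I)) • g z‖ ≤ c := by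
  have hne : ∀ w : ℂ, 0 < w.im → w + r * I ≠ 0 := fun w hw h0 =>
    hr.not_ge (by simpa [h0] using le_norm_add_mul_I hw.le r)
  refine norm_le_of_forall_eventually_norm_lt (isOpen_lt continuous_const continuous_im)
    (((differentiableOn_const _).div (differentiableOn_id.add_const _) hne).smul hg) ?_ ?_ hz
  · rintro p hp c' hc'
    rw [frontier_setOfPred_lt_im] at hp
    rw [show p = (p.re : ℂ) from ext rfl hp]
    filter_upwards [hb p.re c' hc', self_mem_nhdsWithin] with w hw hwH
    rw [Pi.smul_apply', norm_smul]
    exact (mul_le_of_le_one_left (norm_nonneg _)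
      (norm_ofReal_div_add_mul_I_le_one (le_of_lt hwH) hr.le)).trans_lt hw
  · intro c' hc'
    have hc'0 : 0 < c' := by
      have : (𝓝[{z : ℂ | 0 < z.im}] ((0 : ℝ) : ℂ)).NeBot :=
        mem_closure_iff_nhdsWithin_neBot.1 (by simp [closure_setOfPred_lt_im])
      obtain ⟨w, hw⟩ := (hb 0 c' hc').exists
      exact (norm_nonneg _).trans_lt hw
    have hbdd : IsBoundedUnder (· ≤ ·) (cobounded ℂ ⊓ 𝓟 {z | 0 < z.im}) (norm ∘ g) :=
      ⟨M, eventually_map.2 (eventually_inf_principal.2 (Eventually.of_forall hM))⟩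
    have hdecay := ((tendsto_ofReal_div_add_mul_I_cobounded r).mono_left
      inf_le_left).zero_smul_isBoundedUnder_le hbdd
    exact hdecay.norm.eventually_lt_const (by simpa using hc'0)

theorem Complex.norm_le_of_bounded_on_upperHalfPlane {g : ℂ → F}
    (hg : DifferentiableOn ℂ g {z | 0 < z.im}) {M c : ℝ} (hM : ∀ z : ℂ, 0 < z.im → ‖g z‖ ≤ M)
    (hb : ∀ x : ℝ, ∀ c' > c, ∀ᶠ z in 𝓝[{z | 0 < z.im}] (x : ℂ), ‖g z‖ < c') {z : ℂ}
    (hz : 0 < z.im) : ‖g z‖ ≤ c := by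
  have hc : 0 ≤ c := (norm_nonneg _).trans (norm_ofReal_div_add_mul_I_smul_le hg hM hb one_pos hz)
  have hlim : Tendsto (fun r : ℝ => c + c * ‖z‖ / r) atTop (𝓝 c) := by
    simpa using (tendsto_const_nhds (x := c)).add
      ((tendsto_const_nhds (x := c * ‖z‖)).div_atTop tendsto_id)
  refine ge_of_tendsto hlim ?_
  filter_upwards [eventually_gt_atTop 0] with r hr
  have h := norm_ofReal_div_add_mul_I_smul_le hg hM hb hr hz
  rw [norm_smul, norm_div, norm_real, Real.norm_of_nonneg hr.le, div_mul_eq_mul_div,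
    div_le_iff₀ (hr.trans_le (le_norm_add_mul_I hz.le r))] at h
  have htri : ‖z + r * I‖ ≤ ‖z‖ + r := by
    simpa [Real.norm_of_nonneg hr.le] using norm_add_le z (r * I)
  rw [← sub_le_iff_le_add', le_div_iff₀ hr]
  nlinarith

end MaximumPrinciple

theorem norm_le_mul_exp_im_of_norm_le_mul_exp_norm {f : ℂ → ℂ} (hf : Differentiable ℂ f)
    {a C : ℝ} (hgrow : ∀ z, ‖f z‖ ≤ C * Real.exp (a * ‖z‖)) (hreal : ∀ x : ℝ, ‖f x‖ ≤ C)
    {z : ℂ} (hz : 0 ≤ z.im) : ‖f z‖ ≤ C * Real.exp (a * z.im) := by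
  set F : ℂ → ℂ := fun w => exp (a * I * w) * f w
  have hFnorm : ∀ w, ‖F w‖ = Real.exp (-(a * w.im)) * ‖f w‖ := fun w => by simp [F, norm_exp]
  have hC : 0 ≤ C := (norm_nonneg _).trans (hreal 0)
  have hFexp : ∀ s : Set ℂ,
      F =O[cobounded ℂ ⊓ 𝓟 s] fun w => Real.exp (2 * |a| * ‖w‖ ^ (1 : ℝ)) := by
    refine fun s => Asymptotics.IsBigO.of_bound C (Eventually.of_forall fun w => ?_)
    have h₁ : -(a * w.im) ≤ |a| * ‖w‖ :=
      (neg_le_abs _).trans (by rw [abs_mul]; gcongr; exact abs_im_le_norm w)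
    have h₂ : a * ‖w‖ ≤ |a| * ‖w‖ := by gcongr; exact le_abs_self a
    rw [hFnorm, Real.rpow_one, Real.norm_of_nonneg (Real.exp_pos _).le]
    calc Real.exp (-(a * w.im)) * ‖f w‖
        ≤ Real.exp (|a| * ‖w‖) * (C * Real.exp (|a| * ‖w‖)) := by
          gcongr
          exact (hgrow w).trans (by gcongr)
      _ = C * Real.exp (2 * |a| * ‖w‖) := by rw [mul_left_comm, ← Real.exp_add]; ring_nf
  have hFre : ∀ x : ℝ, ‖F x‖ ≤ C := fun x => by simpa [hFnorm] using hreal x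
  have hFim : ∀ y : ℝ, 0 ≤ y → ‖F (y * I)‖ ≤ C := fun y hy => by
    have h := hgrow (y * I)
    rw [norm_mul, norm_I, mul_one, norm_real, Real.norm_of_nonneg hy] at h
    rw [hFnorm, ← le_div_iff₀' (Real.exp_pos _), div_eq_mul_inv, ← Real.exp_neg, neg_neg]
    simpa using h
  have hF : ‖F z‖ ≤ C := by
    have hFd : Differentiable ℂ F := by fun_prop
    rcases le_total 0 z.re with hre | hre
    · exact PhragmenLindelof.quadrant_I hFd.diffContOnCl ⟨1, one_lt_two, 2 * |a|, hFexp _⟩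
        (fun x _ => hFre x) hFim hre hz
    · exact PhragmenLindelof.quadrant_II hFd.diffContOnCl ⟨1, one_lt_two, 2 * |a|, hFexp _⟩
        (fun x _ => hFre x) hFim hre hz
  rwa [hFnorm, ← le_div_iff₀' (Real.exp_pos _), div_eq_mul_inv, ← Real.exp_neg, neg_neg] at hF

section HalfPlanePoisson

def halfPlanePoissonKernel (z : ℂ) (t : ℝ) : ℝ :=
  Real.pi⁻¹ * (z.im / ((t - z.re) ^ 2 + z.im ^ 2))

def halfPlanePoissonIntegral (φ : ℝ → ℝ) (z : ℂ) : ℝ := ∫ t, φ t * halfPlanePoissonKernel z t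

def cauchyTransform (φ : ℝ → ℝ) (z : ℂ) : ℂ := ∫ t : ℝ, φ t * ((t : ℂ) - z)⁻¹

theorem halfPlanePoissonKernel_nonneg {z : ℂ} (hz : 0 ≤ z.im) (t : ℝ) :
    0 ≤ halfPlanePoissonKernel z t :=
  mul_nonneg (inv_nonneg.2 Real.pi_pos.le) (div_nonneg hz (by positivity))

theorem halfPlanePoissonKernel_le_of_le_abs {z : ℂ} (hz : 0 ≤ z.im) {δ t : ℝ} (hδ : 0 < δ)
    (ht : δ ≤ |t - z.re|) : halfPlanePoissonKernel z t ≤ Real.pi⁻¹ * (z.im / δ ^ 2) := by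
  refine mul_le_mul_of_nonneg_left (div_le_div_of_nonneg_left hz (by positivity) ?_)
    (inv_nonneg.2 Real.pi_pos.le)
  nlinarith [sq_abs (t - z.re), sq_nonneg z.im, mul_self_le_mul_self hδ.le ht]

theorem halfPlanePoissonKernel_le {z : ℂ} (hz : 0 < z.im) (t : ℝ) :
    halfPlanePoissonKernel z t ≤ Real.pi⁻¹ * z.im⁻¹ := by
  refine mul_le_mul_of_nonneg_left ?_ (inv_nonneg.2 Real.pi_pos.le)
  rw [div_le_iff₀ (by positivity), inv_mul_eq_div, le_div_iff₀ hz]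
  nlinarith [sq_nonneg (t - z.re)]

theorem halfPlanePoissonKernel_eq {z : ℂ} (hz : 0 < z.im) (t : ℝ) :
    halfPlanePoissonKernel z t = (Real.pi * z.im)⁻¹ * (1 + ((t - z.re) / z.im) ^ 2)⁻¹ := by
  rw [halfPlanePoissonKernel]
  field_simp
  ring

theorem inv_one_add_sq_le_halfPlanePoissonKernel {z : ℂ} (hz : 0 < z.im) (t : ℝ) :
    z.im / (2 * Real.pi * (1 + ‖z‖ ^ 2)) * (1 + t ^ 2)⁻¹ ≤ halfPlanePoissonKernel z t := by
  have hD : (t - z.re) ^ 2 + z.im ^ 2 ≤ 2 * (1 + ‖z‖ ^ 2) * (1 + t ^ 2) := by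
    rw [Complex.sq_norm, normSq_apply]
    nlinarith [sq_nonneg (t + z.re), sq_nonneg (t * z.re), sq_nonneg (t * z.im), sq_nonneg z.im]
  calc z.im / (2 * Real.pi * (1 + ‖z‖ ^ 2)) * (1 + t ^ 2)⁻¹
      = Real.pi⁻¹ * (z.im / (2 * (1 + ‖z‖ ^ 2) * (1 + t ^ 2))) := by field_simp
    _ ≤ halfPlanePoissonKernel z t := by
      rw [halfPlanePoissonKernel]
      gcongr

theorem continuous_halfPlanePoissonKernel {z : ℂ} (hz : 0 < z.im) :
    Continuous (halfPlanePoissonKernel z) :=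
  continuous_const.mul (continuous_const.div (by fun_prop) fun t => by positivity)

theorem Complex.im_inv_ofReal_sub (t : ℝ) (z : ℂ) :
    ((t : ℂ) - z)⁻¹.im = Real.pi * halfPlanePoissonKernel z t := by
  rw [halfPlanePoissonKernel, mul_inv_cancel_left₀ Real.pi_ne_zero]
  simp [inv_im, normSq_apply]
  ring

theorem integral_halfPlanePoissonKernel {z : ℂ} (hz : 0 < z.im) :
    ∫ t, halfPlanePoissonKernel z t = 1 := by
  simp_rw [halfPlanePoissonKernel_eq hz]
  rw [integral_const_mul, integral_sub_right_eq_self (fun t => (1 + (t / z.im) ^ 2)⁻¹),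
    Measure.integral_comp_div (fun t => (1 + t ^ 2)⁻¹), integral_univ_inv_one_add_sq,
    abs_of_pos hz, smul_eq_mul]
  field_simp

theorem integral_Icc_halfPlanePoissonKernel {z : ℂ} (hz : 0 < z.im) {a b : ℝ} (hab : a ≤ b) :
    ∫ t in Icc a b, halfPlanePoissonKernel z t =
      (Real.arctan ((b - z.re) / z.im) - Real.arctan ((a - z.re) / z.im)) / Real.pi := by
  rw [integral_Icc_eq_integral_Ioc, ← intervalIntegral.integral_of_le hab]
  simp_rw [halfPlanePoissonKernel_eq hz, sub_div, intervalIntegral.integral_const_mul]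
  rw [intervalIntegral.integral_comp_div_sub (fun s => (1 + s ^ 2)⁻¹) hz.ne', smul_eq_mul,
    integral_inv_one_add_sq]
  field_simp

theorem integrable_halfPlanePoissonKernel {z : ℂ} (hz : 0 < z.im) :
    Integrable (halfPlanePoissonKernel z) :=
  .of_integral_ne_zero (by rw [integral_halfPlanePoissonKernel hz]; exact one_ne_zero)

theorem tendsto_im_nhdsWithin_upperHalfPlane (x : ℝ) :
    Tendsto im (𝓝[{z : ℂ | 0 < z.im}] (x : ℂ)) (𝓝[>] 0) := by
  refine tendsto_nhdsWithin_iff.2 ⟨?_, self_mem_nhdsWithin⟩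
  simpa using (continuous_im.tendsto (x : ℂ)).mono_left nhdsWithin_le_nhds

theorem tendsto_integral_Icc_halfPlanePoissonKernel (x : ℝ) :
    Tendsto (fun z => ∫ t in Icc (x - 1) (x + 1), halfPlanePoissonKernel z t)
      (𝓝[{z : ℂ | 0 < z.im}] (x : ℂ)) (𝓝 1) := by
  have him := tendsto_inv_nhdsGT_zero.comp (tendsto_im_nhdsWithin_upperHalfPlane x)
  have hre : ∀ c : ℝ,
      Tendsto (fun z : ℂ => c + x - z.re) (𝓝[{z : ℂ | 0 < z.im}] (x : ℂ)) (𝓝 c) := fun c => by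
    simpa using ((continuous_re.tendsto (x : ℂ)).const_sub (c + x)).mono_left nhdsWithin_le_nhds
  have htop := (Real.tendsto_arctan_atTop.mono_right nhdsWithin_le_nhds).comp
    ((hre 1).pos_mul_atTop one_pos him)
  have hbot := (Real.tendsto_arctan_atBot.mono_right nhdsWithin_le_nhds).comp
    ((hre (-1)).neg_mul_atTop (by norm_num) him)
  have hlim := (htop.sub hbot).div_const Real.pi
  rw [show (Real.pi / 2 - -(Real.pi / 2)) / Real.pi = 1 by field_simp; ring] at hlim
  refine hlim.congr' ?_
  filter_upwards [self_mem_nhdsWithin] with z hz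
  rw [integral_Icc_halfPlanePoissonKernel hz (by linarith)]
  simp [div_eq_mul_inv, add_comm, sub_eq_add_neg]

theorem tendstoUniformlyOn_halfPlanePoissonKernel (x : ℝ) {u : Set ℝ} (hu : IsOpen u)
    (hxu : x ∈ u) :
    TendstoUniformlyOn halfPlanePoissonKernel 0 (𝓝[{z : ℂ | 0 < z.im}] (x : ℂ)) uᶜ := by
  obtain ⟨δ, hδ, hδu⟩ := Metric.isOpen_iff.1 hu x hxu
  refine Metric.tendstoUniformlyOn_iff.2 fun ε hε => ?_
  have hre : ∀ᶠ z : ℂ in 𝓝[{z : ℂ | 0 < z.im}] (x : ℂ), |z.re - x| < δ / 2 := by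
    have : Tendsto (fun z : ℂ => |z.re - x|) (𝓝 (x : ℂ)) (𝓝 0) := by
      simpa using (continuous_re.sub (continuous_const (y := x))).abs.tendsto (x : ℂ)
    exact eventually_nhdsWithin_of_eventually_nhds (this.eventually_lt_const (by positivity))
  have him : ∀ᶠ z : ℂ in 𝓝[{z : ℂ | 0 < z.im}] (x : ℂ), z.im < ε * Real.pi * (δ / 2) ^ 2 :=
    ((tendsto_im_nhdsWithin_upperHalfPlane x).mono_right nhdsWithin_le_nhds).eventually_lt_const
      (by positivity)
  filter_upwards [hre, him, self_mem_nhdsWithin] with z hzre hzim hz t ht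
  have htx : δ ≤ |t - x| := by simpa [Real.dist_eq] using fun h => ht (hδu h)
  have hδt : δ / 2 ≤ |t - z.re| := by
    have := abs_sub_abs_le_abs_sub (t - x) (z.re - x)
    rw [sub_sub_sub_cancel_right] at this
    linarith
  rw [Pi.zero_apply, dist_zero_left, Real.norm_of_nonneg (halfPlanePoissonKernel_nonneg hz.le t)]
  calc halfPlanePoissonKernel z t ≤ Real.pi⁻¹ * (z.im / (δ / 2) ^ 2) :=
        halfPlanePoissonKernel_le_of_le_abs hz.le (half_pos hδ) hδt
    _ < ε := by
        rw [inv_mul_lt_iff₀ Real.pi_pos, div_lt_iff₀ (by positivity)]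
        linarith

variable {φ : ℝ → ℝ}

theorem tendsto_halfPlanePoissonIntegral (hφ : Integrable φ) {x : ℝ} (hφx : ContinuousAt φ x) :
    Tendsto (halfPlanePoissonIntegral φ) (𝓝[{z : ℂ | 0 < z.im}] (x : ℂ)) (𝓝 (φ x)) := by
  have h := tendsto_integral_peak_smul_of_integrable_of_tendsto
    (l := 𝓝[{z : ℂ | 0 < z.im}] (x : ℂ)) measurableSet_Icc
    (Icc_mem_nhds (sub_one_lt x) (lt_add_one x)) measure_Icc_lt_top.ne
    (eventually_mem_nhdsWithin.mono fun z hz t => halfPlanePoissonKernel_nonneg (le_of_lt hz) t)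
    (fun u hu hxu => tendstoUniformlyOn_halfPlanePoissonKernel x hu hxu)
    (tendsto_integral_Icc_halfPlanePoissonKernel x)
    (eventually_mem_nhdsWithin.mono fun z hz =>
      (continuous_halfPlanePoissonKernel hz).aestronglyMeasurable) hφ hφx.tendsto
  simp only [smul_eq_mul, mul_comm] at h
  exact h

theorem integrable_mul_halfPlanePoissonKernel (hφ : Integrable φ) {z : ℂ} (hz : 0 < z.im) :
    Integrable fun t => φ t * halfPlanePoissonKernel z t :=
  hφ.mul_bdd (continuous_halfPlanePoissonKernel hz).aestronglyMeasurable
    (Eventually.of_forall fun t => by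
      rw [Real.norm_of_nonneg (halfPlanePoissonKernel_nonneg hz.le t)]
      exact halfPlanePoissonKernel_le hz t)

theorem halfPlanePoissonIntegral_le {B : ℝ} (hφ : Integrable φ) (hφB : ∀ t, φ t ≤ B) {z : ℂ}
    (hz : 0 < z.im) : halfPlanePoissonIntegral φ z ≤ B := by
  calc halfPlanePoissonIntegral φ z ≤ ∫ t, B * halfPlanePoissonKernel z t :=
        integral_mono (integrable_mul_halfPlanePoissonKernel hφ hz)
          ((integrable_halfPlanePoissonKernel hz).const_mul B) fun t =>
          mul_le_mul_of_nonneg_right (hφB t) (halfPlanePoissonKernel_nonneg hz.le t)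
    _ = B := by rw [integral_const_mul, integral_halfPlanePoissonKernel hz, mul_one]

theorem le_halfPlanePoissonIntegral (hφ : Integrable φ) (hφ0 : ∀ t, 0 ≤ φ t) {z : ℂ}
    (hz : 0 < z.im) :
    z.im / (2 * Real.pi * (1 + ‖z‖ ^ 2)) * ∫ t, φ t * (1 + t ^ 2)⁻¹ ≤
      halfPlanePoissonIntegral φ z := by
  have hint : Integrable fun t => φ t * (1 + t ^ 2)⁻¹ :=
    hφ.mul_bdd (by fun_prop) (Eventually.of_forall fun t => by
      rw [norm_inv, Real.norm_of_nonneg (by positivity)]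
      exact inv_le_one_of_one_le₀ (by nlinarith))
  rw [← integral_const_mul]
  refine integral_mono (hint.const_mul _) (integrable_mul_halfPlanePoissonKernel hφ hz)
    fun t => ?_
  rw [mul_left_comm]
  exact mul_le_mul_of_nonneg_left (inv_one_add_sq_le_halfPlanePoissonKernel hz t) (hφ0 t)

theorem Complex.im_le_norm_ofReal_sub (t : ℝ) (z : ℂ) : z.im ≤ ‖(t : ℂ) - z‖ := by
  simpa using (neg_le_abs _).trans (abs_im_le_norm ((t : ℂ) - z))

theorem integrable_mul_inv_ofReal_sub (hφ : Integrable φ) {z : ℂ} (hz : 0 < z.im) :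
    Integrable fun t : ℝ => (φ t : ℂ) * ((t : ℂ) - z)⁻¹ :=
  hφ.ofReal.mul_bdd (by fun_prop) (Eventually.of_forall fun t => by
    rw [norm_inv]
    exact inv_anti₀ hz (im_le_norm_ofReal_sub t z))

theorem im_cauchyTransform (hφ : Integrable φ) {z : ℂ} (hz : 0 < z.im) :
    (cauchyTransform φ z).im = Real.pi * halfPlanePoissonIntegral φ z := by
  rw [cauchyTransform, ← RCLike.im_eq_complex_im,
    ← integral_im (integrable_mul_inv_ofReal_sub hφ hz), halfPlanePoissonIntegral,
    ← integral_const_mul]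
  congr 1 with t
  simp only [RCLike.im_eq_complex_im, mul_im, ofReal_re, ofReal_im, zero_mul, add_zero,
    im_inv_ofReal_sub]
  ring

theorem differentiableOn_cauchyTransform (hφ : Integrable φ) :
    DifferentiableOn ℂ (cauchyTransform φ) {z | 0 < z.im} := by
  intro z₀ hz₀
  have hz₀ : 0 < z₀.im := hz₀
  have hball : ∀ w ∈ Metric.ball z₀ (z₀.im / 2), z₀.im / 2 < w.im := fun w hw => by
    rw [Metric.mem_ball, dist_eq_norm] at hw
    have := (abs_lt.1 ((abs_im_le_norm (w - z₀)).trans_lt hw)).1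
    simp only [sub_im] at this
    linarith
  have hnorm : ∀ t : ℝ, ∀ w ∈ Metric.ball z₀ (z₀.im / 2), z₀.im / 2 < ‖(t : ℂ) - w‖ :=
    fun t w hw => (hball w hw).trans_le (im_le_norm_ofReal_sub t w)
  have hderiv := hasDerivAt_integral_of_dominated_loc_of_deriv_le (μ := volume)
    (F := fun w t => (φ t : ℂ) * ((t : ℂ) - w)⁻¹)
    (F' := fun w t => (φ t : ℂ) * (((t : ℂ) - w) ^ 2)⁻¹)
    (bound := fun t => |φ t| * ((z₀.im / 2) ^ 2)⁻¹)
    (Metric.ball_mem_nhds z₀ (half_pos hz₀)) (Eventually.of_forall fun w => by fun_prop)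
    (integrable_mul_inv_ofReal_sub hφ hz₀) (by fun_prop) ?_ (hφ.abs.mul_const _) ?_
  · exact hderiv.2.differentiableAt.differentiableWithinAt
  · refine Eventually.of_forall fun t w hw => ?_
    rw [norm_mul, norm_inv, norm_pow, norm_real, Real.norm_eq_abs]
    gcongr
    exact (hnorm t w hw).le
  · refine Eventually.of_forall fun t w hw => ?_
    have hne : (t : ℂ) - w ≠ 0 := norm_pos_iff.1 ((half_pos hz₀).trans (hnorm t w hw))
    simpa using (((hasDerivAt_id w).const_sub (t : ℂ)).inv hne).const_mul (φ t : ℂ)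

end HalfPlanePoisson

/-- Equal to `min m (-log u)` on `[-m, m]` and supported in `[-(m+1), m+1]`; the `max` with
`e^{-m}` also sidesteps the junk value `log 0 = 0`. -/
def negLogCutoff (u : ℝ → ℝ) (m : ℕ) (t : ℝ) : ℝ :=
  max 0 (min 1 (m + 1 - |t|)) * -Real.log (max (u t) (Real.exp (-m)))

section negLogCutoff

variable {u : ℝ → ℝ}

theorem continuous_negLogCutoff (hu : Continuous u) (m : ℕ) : Continuous (negLogCutoff u m) :=
  (by fun_prop : Continuous fun t : ℝ => max 0 (min 1 (m + 1 - |t|))).mul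
    ((hu.max continuous_const).log fun _ =>
      ((Real.exp_pos _).trans_le (le_max_right _ _)).ne').neg

theorem hasCompactSupport_negLogCutoff (u : ℝ → ℝ) (m : ℕ) :
    HasCompactSupport (negLogCutoff u m) :=
  HasCompactSupport.intro (isCompact_Icc (a := -(m + 1 : ℝ)) (b := m + 1)) fun t ht => by
    have : m + 1 ≤ |t| := by
      rw [mem_Icc, not_and_or, not_le, not_le] at ht
      refine le_abs.2 ?_
      rcases ht with ht | ht
      · right; linarith
      · left; exact ht.le
    simp [negLogCutoff, this]

theorem continuous_negLogCutoff_mul_inv_one_add_sq (hu : Continuous u) (m : ℕ) :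
    Continuous fun t => negLogCutoff u m t * (1 + t ^ 2)⁻¹ :=
  (continuous_negLogCutoff hu m).mul ((by fun_prop : Continuous fun t : ℝ => 1 + t ^ 2).inv₀
    fun t => by positivity)

variable {t : ℝ}

theorem neg_log_max_exp_neg_nonneg (hu : u t ≤ 1) (m : ℕ) :
    0 ≤ -Real.log (max (u t) (Real.exp (-m))) :=
  neg_nonneg.2 (Real.log_nonpos ((Real.exp_pos _).le.trans (le_max_right _ _))
    (max_le hu (Real.exp_le_one_iff.2 (by simp))))

theorem negLogCutoff_nonneg (hu : u t ≤ 1) (m : ℕ) : 0 ≤ negLogCutoff u m t :=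
  mul_nonneg (le_max_left _ _) (neg_log_max_exp_neg_nonneg hu m)

theorem mul_exp_negLogCutoff_le_one (hu : u t ≤ 1) (m : ℕ) :
    u t * Real.exp (negLogCutoff u m t) ≤ 1 := by
  set M := max (u t) (Real.exp (-m))
  have hM : 0 < M := (Real.exp_pos _).trans_le (le_max_right _ _)
  have hw : negLogCutoff u m t ≤ -Real.log M :=
    mul_le_of_le_one_left (neg_log_max_exp_neg_nonneg hu m) (max_le zero_le_one (min_le_left _ _))
  calc u t * Real.exp (negLogCutoff u m t) ≤ M * Real.exp (-Real.log M) :=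
        mul_le_mul (le_max_left _ _) (Real.exp_le_exp.2 hw) (Real.exp_pos _).le hM.le
    _ = 1 := by rw [Real.exp_neg, Real.exp_log hM, mul_inv_cancel₀ hM.ne']

theorem monotone_negLogCutoff (hu : u t ≤ 1) : Monotone fun m => negLogCutoff u m t := by
  intro m n hmn
  have hmn' : (m : ℝ) ≤ n := Nat.cast_le.2 hmn
  refine mul_le_mul (by gcongr) ?_ (neg_log_max_exp_neg_nonneg hu m) (le_max_left _ _)
  refine neg_le_neg (Real.log_le_log ((Real.exp_pos _).trans_le (le_max_right _ _)) ?_)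
  gcongr

theorem le_negLogCutoff {s : ℝ} (hs : u t ≤ Real.exp (-s)) {m : ℕ} (ht : |t| ≤ m)
    (hsm : s ≤ m) : s ≤ negLogCutoff u m t := by
  have hbump : max 0 (min 1 (m + 1 - |t|)) = 1 := by
    rw [min_eq_left (by linarith), max_eq_right zero_le_one]
  rw [negLogCutoff, hbump, one_mul, le_neg, ← Real.log_exp (-s)]
  exact Real.log_le_log ((Real.exp_pos _).trans_le (le_max_right _ _))
    (max_le hs (Real.exp_le_exp.2 (by linarith)))

theorem exists_lt_integral_negLogCutoff (hu : Continuous u) (hu1 : ∀ t, u t ≤ 1) {ψ : ℝ → ℝ}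
    (hψ : ∀ t, u t ≤ Real.exp (-ψ t)) (hI : ∫⁻ t, ENNReal.ofReal (ψ t / (1 + t ^ 2)) = ⊤)
    (L : ℝ) : ∃ m : ℕ, L < ∫ t, negLogCutoff u m t * (1 + t ^ 2)⁻¹ := by
  set w : ℕ → ℝ → ENNReal := fun m t => ENNReal.ofReal (negLogCutoff u m t * (1 + t ^ 2)⁻¹)
  have hψw : ∀ t, ENNReal.ofReal (ψ t / (1 + t ^ 2)) ≤ ⨆ m, w m t := fun t => by
    obtain ⟨m, hm⟩ := exists_nat_ge (max |t| (ψ t))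
    refine le_iSup_of_le m (ENNReal.ofReal_le_ofReal ?_)
    rw [div_eq_mul_inv]
    gcongr
    exact le_negLogCutoff (hψ t) ((le_max_left _ _).trans hm) ((le_max_right _ _).trans hm)
  have hsup : ⨆ m, ∫⁻ t, w m t = ⊤ := by
    rw [← lintegral_iSup (f := w) (fun m => ENNReal.measurable_ofReal.comp
      (continuous_negLogCutoff_mul_inv_one_add_sq hu m).measurable) ?_]
    · exact top_unique (hI ▸ lintegral_mono hψw)
    · intro m n hmn t
      exact ENNReal.ofReal_le_ofReal (by gcongr; exact monotone_negLogCutoff (hu1 t) hmn)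
  obtain ⟨m, hm⟩ := lt_iSup_iff.1 (hsup ▸ ENNReal.ofReal_lt_top :
    ENNReal.ofReal L < ⨆ m, ∫⁻ t, w m t)
  refine ⟨m, (ENNReal.ofReal_lt_ofReal_iff' ).1 ?_ |>.1⟩
  rwa [ofReal_integral_eq_lintegral_ofReal
    ((continuous_negLogCutoff_mul_inv_one_add_sq hu m).integrable_of_hasCompactSupport
      (hasCompactSupport_negLogCutoff u m).mul_right)
    (Eventually.of_forall fun t => mul_nonneg (negLogCutoff_nonneg (hu1 t) m) (by positivity))]

end negLogCutoff

section ExponentialType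

variable {f : ℂ → ℂ} {a C : ℝ} {φ : ℝ → ℝ}

theorem norm_exp_mul_I_sub_cauchyTransform (hφ : Integrable φ) {z : ℂ} (hz : 0 < z.im) :
    ‖exp (a * I * z - I * cauchyTransform φ z / Real.pi)‖ =
      Real.exp (-(a * z.im) + halfPlanePoissonIntegral φ z) := by
  rw [norm_exp]
  congr 1
  simp [div_eq_mul_inv, im_cauchyTransform hφ hz]
  field_simp

theorem tendsto_norm_mul_exp_halfPlanePoissonIntegral (hf : Continuous f) (hφ : Integrable φ)
    {x : ℝ} (hφx : ContinuousAt φ x) :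
    Tendsto (fun z => ‖f z‖ * Real.exp (-(a * z.im) + halfPlanePoissonIntegral φ z))
      (𝓝[{z : ℂ | 0 < z.im}] (x : ℂ)) (𝓝 (‖f x‖ * Real.exp (φ x))) := by
  have him := ((tendsto_im_nhdsWithin_upperHalfPlane x).mono_right nhdsWithin_le_nhds).const_mul a
  simpa using ((hf.norm.tendsto _).mono_left nhdsWithin_le_nhds).mul
    (Real.continuous_exp.continuousAt.tendsto.comp
      (him.neg.add (tendsto_halfPlanePoissonIntegral hφ hφx)))

theorem norm_mul_exp_halfPlanePoissonIntegral_le (hf : Differentiable ℂ f)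
    (hgrow : ∀ z, ‖f z‖ ≤ C * Real.exp (a * ‖z‖)) (hφ : Continuous φ) (hφs : HasCompactSupport φ)
    (hφ0 : ∀ t, 0 ≤ φ t) (hφf : ∀ x : ℝ, ‖f x‖ * Real.exp (φ x) ≤ C) {z : ℂ} (hz : 0 < z.im) :
    ‖f z‖ * Real.exp (halfPlanePoissonIntegral φ z) ≤ C * Real.exp (a * z.im) := by
  have hφi : Integrable φ := hφ.integrable_of_hasCompactSupport hφs
  obtain ⟨B, hB⟩ := hφ.bddAbove_range_of_hasCompactSupport hφs
  have hreal : ∀ x : ℝ, ‖f x‖ ≤ C := fun x =>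
    (le_mul_of_one_le_right (norm_nonneg _) (Real.one_le_exp (hφ0 x))).trans (hφf x)
  set g : ℂ → ℂ := fun w => f w * exp (a * I * w - I * cauchyTransform φ w / Real.pi)
  have hgnorm : ∀ w : ℂ, 0 < w.im →
      ‖g w‖ = ‖f w‖ * Real.exp (-(a * w.im) + halfPlanePoissonIntegral φ w) := fun w hw => by
    rw [norm_mul, norm_exp_mul_I_sub_cauchyTransform hφi hw]
  have hg : DifferentiableOn ℂ g {w | 0 < w.im} :=
    hf.differentiableOn.mul (((differentiableOn_const _).mul differentiableOn_id).sub
      ((differentiableOn_const _).mul (differentiableOn_cauchyTransform hφi) |>.div_const _)).cexp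
  have hM : ∀ w : ℂ, 0 < w.im → ‖g w‖ ≤ C * Real.exp B := fun w hw => by
    have hfw := norm_le_mul_exp_im_of_norm_le_mul_exp_norm hf hgrow hreal hw.le
    have hP := halfPlanePoissonIntegral_le hφi (fun t => hB ⟨t, rfl⟩) hw
    calc ‖g w‖ ≤ C * Real.exp (a * w.im) * Real.exp (-(a * w.im) + B) := by
          rw [hgnorm w hw]
          exact mul_le_mul hfw (Real.exp_le_exp.2 (by linarith)) (Real.exp_pos _).le
            ((norm_nonneg _).trans hfw)
      _ = C * Real.exp B := by rw [mul_assoc, ← Real.exp_add]; ring_nf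
  have hb : ∀ x : ℝ, ∀ c' > C, ∀ᶠ w in 𝓝[{w : ℂ | 0 < w.im}] (x : ℂ), ‖g w‖ < c' :=
    fun x c' hc' => by
      filter_upwards [(tendsto_norm_mul_exp_halfPlanePoissonIntegral hf.continuous hφi
        hφ.continuousAt).eventually_lt_const ((hφf x).trans_lt hc'), self_mem_nhdsWithin]
        with w hw hwH
      rwa [hgnorm w hwH]
  have h := norm_le_of_bounded_on_upperHalfPlane hg hM hb hz
  rwa [hgnorm z hz, Real.exp_add, mul_left_comm, Real.exp_neg, ← div_eq_inv_mul,
    div_le_iff₀ (Real.exp_pos _)] at h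

theorem integral_mul_inv_one_add_sq_le (hf : Differentiable ℂ f)
    (hgrow : ∀ z, ‖f z‖ ≤ C * Real.exp (a * ‖z‖)) (hφ : Continuous φ) (hφs : HasCompactSupport φ)
    (hφ0 : ∀ t, 0 ≤ φ t) (hφf : ∀ x : ℝ, ‖f x‖ * Real.exp (φ x) ≤ C) {z : ℂ} (hz : 0 < z.im)
    (hfz : f z ≠ 0) :
    ∫ t, φ t * (1 + t ^ 2)⁻¹ ≤
      C * Real.exp (a * z.im) / ‖f z‖ / (z.im / (2 * Real.pi * (1 + ‖z‖ ^ 2))) := by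
  have hlow := le_halfPlanePoissonIntegral (hφ.integrable_of_hasCompactSupport hφs) hφ0 hz
  have hup := norm_mul_exp_halfPlanePoissonIntegral_le hf hgrow hφ hφs hφ0 hφf hz
  have hP : ‖f z‖ * halfPlanePoissonIntegral φ z ≤ C * Real.exp (a * z.im) :=
    (mul_le_mul_of_nonneg_left
      (by linarith [Real.add_one_le_exp (halfPlanePoissonIntegral φ z)]) (norm_nonneg _)).trans hup
  rw [le_div_iff₀ (by positivity), le_div_iff₀ (norm_pos_iff.2 hfz), mul_comm _ (z.im / _)]
  nlinarith [norm_nonneg (f z)]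

end ExponentialType

end

theorem entire_one_var_stmt4_general
    (f : ℂ → ℂ) (hf : Differentiable ℂ f)
    (ψ : ℝ → ℝ)
    (hψ0 : ∀ x : ℝ, 0 ≤ ψ x)
    (a C : ℝ) (hC : 0 < C)
    (hgrow : ∀ z : ℂ, ‖f z‖ ≤ C * Real.exp (a * ‖z‖))
    (hreal : ∀ x : ℝ, ‖f x‖ ≤ C * Real.exp (-ψ x))
    (hI : ∫⁻ r : ℝ, ENNReal.ofReal (ψ r / (1 + r ^ 2)) = ⊤) :
    f = 0 := by
  set u : ℝ → ℝ := fun x => ‖f x‖ / C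
  have hu : Continuous u := (hf.continuous.comp continuous_ofReal).norm.div_const C
  have huψ : ∀ x, u x ≤ Real.exp (-ψ x) := fun x => (div_le_iff₀' hC).2 (hreal x)
  have hu1 : ∀ x, u x ≤ 1 := fun x => (huψ x).trans (Real.exp_le_one_iff.2 (neg_nonpos.2 (hψ0 x)))
  have hH : ∀ z : ℂ, 0 < z.im → f z = 0 := by
    intro z hz
    by_contra hfz
    obtain ⟨m, hm⟩ := exists_lt_integral_negLogCutoff hu hu1 huψ hI
      (C * Real.exp (a * z.im) / ‖f z‖ / (z.im / (2 * Real.pi * (1 + ‖z‖ ^ 2))))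
    refine hm.not_ge (integral_mul_inv_one_add_sq_le hf hgrow (continuous_negLogCutoff hu m)
      (hasCompactSupport_negLogCutoff u m) (fun t => negLogCutoff_nonneg (hu1 t) m) (fun x => ?_)
      hz hfz)
    have := mul_exp_negLogCutoff_le_one (hu1 x) m
    rwa [div_mul_eq_mul_div, div_le_one hC] at this
  have hzero : f =ᶠ[𝓝 I] 0 :=
    eventually_of_mem ((isOpen_lt continuous_const continuous_im).mem_nhds (by simp)) hH
  funext z
  exact (analyticOnNhd_univ_iff_differentiable.2 hf).eqOn_zero_of_preconnected_of_eventuallyEq_zero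
    isPreconnected_univ (mem_univ I) hzero (mem_univ z)

/-- An entire function on `ℂ` of exponential type which satisfies
`|f(x)| ≤ C e^{-ψ(x)}` on `ℝ` for a non-negative, even, locally integrable `ψ`
with `∫_ℝ ψ(r)/(1+r²) dr = ∞` vanishes identically. -/
theorem entire_one_var_stmt4
    (f : ℂ → ℂ) (hf : Differentiable ℂ f)
    (ψ : ℝ → ℝ)
    (hψ0 : ∀ x : ℝ, 0 ≤ ψ x)
    (hψeven : ∀ x : ℝ, ψ (-x) = ψ x)
    (hψloc : LocallyIntegrable ψ)
    (a C : ℝ) (ha : 0 < a) (hC : 0 < C)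
    (hgrow : ∀ z : ℂ, ‖f z‖ ≤ C * Real.exp (a * ‖z‖))
    (hreal : ∀ x : ℝ, ‖f x‖ ≤ C * Real.exp (-ψ x))
    (hI : ∫⁻ r : ℝ, ENNReal.ofReal (ψ r / (1 + r ^ 2)) = ⊤) :
    f = 0 :=
  entire_one_var_stmt4_general f hf ψ hψ0 a C hC hgrow hreal hI
end

section
/- Let f be an entire function on ℂ and a, C > 0 constants such that |f(z)| ≤ C e^{a|z|} for all z ∈ ℂ and |f(x)| ≤ C for all x ∈ ℝ. Then the entire function g(z) = (1/C) e^{iaz} f(z) satisfies |g(z)| ≤ 1 for all z in the closed upper half plane {z ∈ ℂ : Im z ≥ 0}. -/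
/-!
On the real axis `|g| ≤ 1` by hypothesis, and on the positive imaginary axis the decay of
`e^{iaz}` exactly cancels the growth bound of `f`, so `|g| ≤ 1` there too. Since `g` grows at
most like `e^{2|a||z|}` (order 1: critical for a half plane, but below the critical order 2 of
a quadrant), the Phragmén–Lindelöf principle in the first and second quadrants propagates the
bound to the upper half plane.
-/

open Complex Filter Asymptotics Bornology

lemma norm_exp_I_mul_ofReal_mul (a : ℝ) (z : ℂ) :
    ‖exp (I * a * z)‖ = Real.exp (-(a * z.im)) := by
  rw [norm_exp]
  simp [mul_re, mul_im]

lemma norm_inv_mul_exp_I_mul_le {f : ℂ → ℂ} {a C : ℝ} (hC : 0 < C) {z : ℂ}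
    (hgrow : ‖f z‖ ≤ C * Real.exp (a * ‖z‖)) :
    ‖(1 / (C : ℂ)) * exp (I * a * z) * f z‖ ≤ Real.exp (a * (‖z‖ - z.im)) := by
  rw [norm_mul, norm_mul, norm_exp_I_mul_ofReal_mul, norm_div, norm_one, norm_real,
    Real.norm_of_nonneg hC.le]
  calc 1 / C * Real.exp (-(a * z.im)) * ‖f z‖
      ≤ 1 / C * Real.exp (-(a * z.im)) * (C * Real.exp (a * ‖z‖)) := by gcongr
    _ = Real.exp (a * (‖z‖ - z.im)) := by
      rw [mul_sub, sub_eq_add_neg, Real.exp_add]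
      field_simp

lemma mul_norm_sub_im_le (a : ℝ) (z : ℂ) : a * (‖z‖ - z.im) ≤ 2 * |a| * ‖z‖ := by
  have him_le : |z.im| ≤ ‖z‖ := abs_im_le_norm z
  calc a * (‖z‖ - z.im) ≤ |a| * (‖z‖ - z.im) := by
        gcongr
        · linarith [le_abs_self z.im]
        · exact le_abs_self a
    _ ≤ |a| * (2 * ‖z‖) := by gcongr; linarith [neg_abs_le z.im]
    _ = 2 * |a| * ‖z‖ := by ring

lemma norm_le_on_upper_half_plane {g : ℂ → ℂ} {c B : ℝ} (hd : Differentiable ℂ g)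
    (hO : g =O[cobounded ℂ] fun z => Real.exp (c * ‖z‖))
    (hre : ∀ x : ℝ, ‖g x‖ ≤ B) (him : ∀ y : ℝ, 0 ≤ y → ‖g (y * I)‖ ≤ B)
    {z : ℂ} (hz : 0 ≤ z.im) : ‖g z‖ ≤ B := by
  have hO' (S : Set ℂ) : ∃ c' < (2 : ℝ), ∃ B',
      g =O[cobounded ℂ ⊓ 𝓟 S] fun z => Real.exp (B' * ‖z‖ ^ c') :=
    ⟨1, one_lt_two, c, by simpa only [Real.rpow_one] using hO.mono inf_le_left⟩
  rcases le_total 0 z.re with hz_re | hz_re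
  · exact PhragmenLindelof.quadrant_I hd.diffContOnCl (hO' _) (fun x _ => hre x) him hz_re hz
  · exact PhragmenLindelof.quadrant_II hd.diffContOnCl (hO' _) (fun x _ => hre x) him hz_re hz

theorem phragmen_lindelof_stmt10_general
    (f : ℂ → ℂ) (hf : Differentiable ℂ f)
    (a C : ℝ) (hC : 0 < C)
    (hgrow : ∀ z : ℂ, ‖f z‖ ≤ C * Real.exp (a * ‖z‖))
    (hreal : ∀ x : ℝ, ‖f x‖ ≤ C) :
    ∀ z : ℂ, 0 ≤ z.im →
      ‖(1 / (C : ℂ)) * Complex.exp (Complex.I * (a : ℂ) * z) * f z‖ ≤ 1 := by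
  set g : ℂ → ℂ := fun z => (1 / (C : ℂ)) * exp (I * a * z) * f z
  have hg_le (z : ℂ) : ‖g z‖ ≤ Real.exp (a * (‖z‖ - z.im)) :=
    norm_inv_mul_exp_I_mul_le hC (hgrow z)
  have hd : Differentiable ℂ g := by fun_prop
  have hO : g =O[cobounded ℂ] fun z => Real.exp (2 * |a| * ‖z‖) := by
    refine IsBigO.of_bound 1 (Eventually.of_forall fun z => ?_)
    rw [one_mul, Real.norm_of_nonneg (Real.exp_pos _).le]
    exact (hg_le z).trans (Real.exp_le_exp.2 (mul_norm_sub_im_le a z))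
  have hre (x : ℝ) : ‖g x‖ ≤ 1 := by
    simpa [g, norm_exp_I_mul_ofReal_mul, abs_of_pos hC, inv_mul_le_one₀ hC] using hreal x
  have him (y : ℝ) (hy : 0 ≤ y) : ‖g (y * I)‖ ≤ 1 := by
    simpa [abs_of_nonneg hy] using hg_le (y * I)
  exact fun z hz => norm_le_on_upper_half_plane hd hO hre him hz

/-- **Phragmén–Lindelöf bound.** If `f` is entire with `|f(z)| ≤ C e^{a|z|}` on `ℂ`
and `|f(x)| ≤ C` on `ℝ`, then `g(z) = (1/C) e^{iaz} f(z)` satisfies `|g(z)| ≤ 1` on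
the closed upper half plane. -/
theorem phragmen_lindelof_stmt10
    (f : ℂ → ℂ) (hf : Differentiable ℂ f)
    (a C : ℝ) (ha : 0 < a) (hC : 0 < C)
    (hgrow : ∀ z : ℂ, ‖f z‖ ≤ C * Real.exp (a * ‖z‖))
    (hreal : ∀ x : ℝ, ‖f x‖ ≤ C) :
    ∀ z : ℂ, 0 ≤ z.im →
      ‖(1 / (C : ℂ)) * Complex.exp (Complex.I * (a : ℂ) * z) * f z‖ ≤ 1 :=
  phragmen_lindelof_stmt10_general f hf a C hC hgrow hreal
end

section
/- Let ψ : [0,∞) → [0,∞) be locally integrable. Then for every s ≥ 0, the inequality ∫_ℝ ψ(√(s² + x²)) / (1 + x²) dx ≥ 2 ∫_s^∞ ψ(r)/(1 + r²) dr holds (both sides possibly equal to +∞). In particular, if ∫₀^∞ ψ(r)/(1+r²) dr = ∞ then ∫_ℝ ψ(√(s² + x²))/(1+x²) dx = ∞ for every s ≥ 0. -/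
/-!
The integrand is even in `x`, and on `x > 0` the substitution `r = √(s² + x²)` is a bijection
onto `r > s`. Its Jacobian `dr/dx = x / r` is at most `1` and `1 + x² ≤ 1 + r²`, so each
half-line contributes at least `∫_s^∞ ψ(r)/(1 + r²) dr`. For the divergence statement, local
integrability makes `∫_0^s` finite, so divergence of `∫_0^∞` forces divergence of `∫_s^∞`.
-/

open MeasureTheory Set
open scoped ENNReal

theorem lintegral_eq_two_mul_setLIntegral_Ioi_of_even {F : ℝ → ℝ≥0∞} (hF : ∀ x, F (-x) = F x) :
    ∫⁻ x, F x = 2 * ∫⁻ x in Ioi 0, F x := by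
  have h_neg : ∫⁻ x in Iic 0, F x = ∫⁻ x in Ioi 0, F x := by
    calc ∫⁻ x in Iic 0, F x = ∫⁻ x in Neg.neg ⁻¹' Ici 0, F (-x) := by simp [hF]
      _ = ∫⁻ x in Ici 0, F x :=
        (Measure.measurePreserving_neg volume).setLIntegral_comp_preimage_emb
          (Homeomorph.neg ℝ).measurableEmbedding F _
      _ = ∫⁻ x in Ioi 0, F x := setLIntegral_congr Ioi_ae_eq_Ici.symm
  rw [← lintegral_add_compl F measurableSet_Ioi, compl_Ioi, h_neg, two_mul]

theorem hasDerivAt_sqrt_sq_add_sq (s : ℝ) {x : ℝ} (hx : x ≠ 0) :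
    HasDerivAt (fun x => √(s ^ 2 + x ^ 2)) (x / √(s ^ 2 + x ^ 2)) x := by
  have h := ((hasDerivAt_pow 2 x).const_add (s ^ 2)).sqrt (by positivity)
  convert h using 1
  field_simp
  ring

theorem strictMonoOn_sqrt_sq_add_sq (s : ℝ) : StrictMonoOn (fun x => √(s ^ 2 + x ^ 2)) (Ici 0) := by
  intro x hx y hy hxy
  apply Real.sqrt_lt_sqrt (by positivity)
  have := pow_lt_pow_left₀ hxy hx two_ne_zero
  linarith

theorem image_sqrt_sq_add_sq_Ioi {s : ℝ} (hs : 0 ≤ s) :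
    (fun x => √(s ^ 2 + x ^ 2)) '' Ioi 0 = Ioi s := by
  ext r
  constructor
  · rintro ⟨x, hx, rfl⟩
    exact (Real.lt_sqrt hs).mpr (lt_add_of_pos_right _ (pow_pos hx 2))
  · intro hr
    have hr' : s < r := hr
    have hsr : 0 < r ^ 2 - s ^ 2 := by nlinarith
    refine ⟨√(r ^ 2 - s ^ 2), Real.sqrt_pos.mpr hsr, ?_⟩
    simp only
    rw [Real.sq_sqrt hsr.le, add_sub_cancel, Real.sqrt_sq (hs.trans hr'.le)]

theorem setLIntegral_Ioi_eq_setLIntegral_Ioi_sqrt_sq_add_sq {s : ℝ} (hs : 0 ≤ s) (g : ℝ → ℝ≥0∞) :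
    ∫⁻ r in Ioi s, g r
      = ∫⁻ x in Ioi 0, ENNReal.ofReal (x / √(s ^ 2 + x ^ 2)) * g √(s ^ 2 + x ^ 2) := by
  rw [← image_sqrt_sq_add_sq_Ioi hs, lintegral_image_eq_lintegral_abs_deriv_mul measurableSet_Ioi
    (fun x hx => (hasDerivAt_sqrt_sq_add_sq s (ne_of_gt hx)).hasDerivWithinAt)
    ((strictMonoOn_sqrt_sq_add_sq s).injOn.mono Ioi_subset_Ici_self)]
  refine setLIntegral_congr_fun measurableSet_Ioi fun x hx => ?_
  rw [abs_of_nonneg (div_nonneg (le_of_lt hx) (Real.sqrt_nonneg _))]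

theorem setLIntegral_Ioi_le_setLIntegral_Ioi_slice {ψ : ℝ → ℝ} (hψ0 : ∀ r ≥ (0 : ℝ), 0 ≤ ψ r)
    {s : ℝ} (hs : 0 ≤ s) :
    ∫⁻ r in Ioi s, ENNReal.ofReal (ψ r / (1 + r ^ 2))
      ≤ ∫⁻ x in Ioi 0, ENNReal.ofReal (ψ √(s ^ 2 + x ^ 2) / (1 + x ^ 2)) := by
  rw [setLIntegral_Ioi_eq_setLIntegral_Ioi_sqrt_sq_add_sq hs]
  refine setLIntegral_mono' measurableSet_Ioi fun x hx => ?_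
  have hx : 0 < x := hx
  have hr : 0 < √(s ^ 2 + x ^ 2) := Real.sqrt_pos.mpr (by positivity)
  have hjac : x / √(s ^ 2 + x ^ 2) ≤ 1 := by
    rw [div_le_one hr]
    exact Real.le_sqrt_of_sq_le (le_add_of_nonneg_left (sq_nonneg s))
  calc ENNReal.ofReal (x / √(s ^ 2 + x ^ 2))
        * ENNReal.ofReal (ψ √(s ^ 2 + x ^ 2) / (1 + √(s ^ 2 + x ^ 2) ^ 2))
      ≤ ENNReal.ofReal (ψ √(s ^ 2 + x ^ 2) / (1 + √(s ^ 2 + x ^ 2) ^ 2)) :=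
        mul_le_of_le_one_left' (ENNReal.ofReal_le_one.mpr hjac)
    _ ≤ ENNReal.ofReal (ψ √(s ^ 2 + x ^ 2) / (1 + x ^ 2)) := by
        refine ENNReal.ofReal_le_ofReal (div_le_div_of_nonneg_left (hψ0 _ hr.le) (by positivity) ?_)
        rw [Real.sq_sqrt (by positivity)]
        linarith [sq_nonneg s]

theorem MeasureTheory.LocallyIntegrableOn.setLIntegral_ofReal_div_one_add_sq_lt_top {ψ : ℝ → ℝ}
    (hψ : LocallyIntegrableOn ψ (Ici 0)) (s : ℝ) :
    ∫⁻ r in Ico 0 s, ENNReal.ofReal (ψ r / (1 + r ^ 2)) < ⊤ := by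
  have h : IntegrableOn (fun r => ψ r * (1 + r ^ 2)⁻¹) (Icc 0 s) :=
    (hψ.integrableOn_compact_subset Icc_subset_Ici_self isCompact_Icc).mul_continuousOn
      (by fun_prop (disch := intro r _; positivity)) isCompact_Icc
  simpa only [div_eq_mul_inv] using (h.mono_set Ico_subset_Icc_self).lintegral_lt_top

theorem two_mul_setLIntegral_Ici_le_lintegral_slice {ψ : ℝ → ℝ} (hψ0 : ∀ r ≥ (0 : ℝ), 0 ≤ ψ r)
    {s : ℝ} (hs : 0 ≤ s) :
    2 * ∫⁻ r in Ici s, ENNReal.ofReal (ψ r / (1 + r ^ 2))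
      ≤ ∫⁻ x, ENNReal.ofReal (ψ √(s ^ 2 + x ^ 2) / (1 + x ^ 2)) := by
  rw [lintegral_eq_two_mul_setLIntegral_Ioi_of_even (fun x => by rw [neg_sq]),
    setLIntegral_congr Ioi_ae_eq_Ici.symm]
  gcongr 2 * ?_
  exact setLIntegral_Ioi_le_setLIntegral_Ioi_slice hψ0 hs

theorem setLIntegral_Ici_eq_top_of_setLIntegral_Ico_ne_top {f : ℝ → ℝ≥0∞} {a b : ℝ} (hab : a ≤ b)
    (htop : ∫⁻ x in Ici a, f x = ⊤) (hfin : ∫⁻ x in Ico a b, f x ≠ ⊤) :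
    ∫⁻ x in Ici b, f x = ⊤ := by
  rw [← Ico_union_Ici_eq_Ici hab, lintegral_union measurableSet_Ici
    ((Iio_disjoint_Ici le_rfl).mono_left Ico_subset_Iio_self), ENNReal.add_eq_top] at htop
  exact htop.resolve_left hfin

/-- For a locally integrable `ψ : [0,∞) → [0,∞)` and every `s ≥ 0`,
`∫_ℝ ψ(√(s²+x²))/(1+x²) dx ≥ 2 ∫_s^∞ ψ(r)/(1+r²) dr` (values in `[0,∞]`);
in particular, if `∫₀^∞ ψ(r)/(1+r²) dr = ∞` then the left-hand side is `∞`
for every `s ≥ 0`. -/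
theorem slice_integral_lower_bound_stmt13
    (ψ : ℝ → ℝ)
    (hψ0 : ∀ r ≥ (0 : ℝ), 0 ≤ ψ r)
    (hψloc : LocallyIntegrableOn ψ (Set.Ici 0)) :
    (∀ s ≥ (0 : ℝ),
      2 * ∫⁻ r in Set.Ici s, ENNReal.ofReal (ψ r / (1 + r ^ 2))
        ≤ ∫⁻ x : ℝ, ENNReal.ofReal (ψ (Real.sqrt (s ^ 2 + x ^ 2)) / (1 + x ^ 2))) ∧
    ((∫⁻ r in Set.Ici (0 : ℝ), ENNReal.ofReal (ψ r / (1 + r ^ 2))) = ⊤ →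
      ∀ s ≥ (0 : ℝ),
        ∫⁻ x : ℝ, ENNReal.ofReal (ψ (Real.sqrt (s ^ 2 + x ^ 2)) / (1 + x ^ 2)) = ⊤) := by
  refine ⟨fun s hs => two_mul_setLIntegral_Ici_le_lintegral_slice hψ0 hs, fun htop s hs => ?_⟩
  have hs_top := setLIntegral_Ici_eq_top_of_setLIntegral_Ico_ne_top hs htop
    (hψloc.setLIntegral_ofReal_div_one_add_sq_lt_top s).ne
  simpa [hs_top] using two_mul_setLIntegral_Ici_le_lintegral_slice hψ0 hs
end
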